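/- Let G be a finite 2-group which is a non-trivial OC-group. Then the index of Z(G) in the second center Z_2(G) equals 2, i.e. |Z_2(G)/Z(G)| = 2. -/

import Mathlib

/-!
Conjugation fixes every coset of `Z(G)` inside `Z₂(G)`, so in an OC-group two non-central
elements of `Z₂(G)` of the same order lie in the same coset; as `u` is conjugate to `u⁻¹`,
these cosets have order two in `G / Z(G)`. If `N` is the largest order of a central element,
an element of maximal order in such a coset has order `N` or `2N`. Three distinct non-trivial
cosets `uZ`, `vZ`, `uvZ` would thus contain two elements of the same order in different cosets.
-/

def IsOCGroup (G : Type*) [Group G] : Prop :=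
  ∀ x y : G, x ∉ Subgroup.center G → y ∉ Subgroup.center G → orderOf x = orderOf y → IsConj x y

section

open Subgroup QuotientGroup

variable {G : Type*} [Group G]

theorem mem_upperCentralSeries_two_iff {x : G} :
    x ∈ Subgroup.upperCentralSeries G 2 ↔ (x : G ⧸ center G) ∈ center (G ⧸ center G) := by
  rw [← Subgroup.comap_upperCentralSeries_quotient_center 1, Subgroup.upperCentralSeries_one]
  rfl

theorem IsConj.mk_eq_of_mem_upperCentralSeries_two {x y : G} (hxy : IsConj x y)
    (hx : x ∈ Subgroup.upperCentralSeries G 2) : (x : G ⧸ center G) = y := by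
  obtain ⟨c, rfl⟩ := isConj_iff.mp hxy
  rw [mk_mul, mk_mul, mk_inv, mem_center_iff.mp (mem_upperCentralSeries_two_iff.mp hx),
    mul_inv_cancel_right]

namespace IsPGroup

variable {p : ℕ} [hp : Fact p.Prime]

theorem orderOf_dvd_of_le (hG : IsPGroup p G) {x y : G} (h : orderOf x ≤ orderOf y) :
    orderOf x ∣ orderOf y := by
  obtain ⟨i, hi⟩ := IsPGroup.iff_orderOf.mp hG x
  obtain ⟨j, hj⟩ := IsPGroup.iff_orderOf.mp hG y
  rw [hi, hj, Nat.pow_le_pow_iff_right hp.out.one_lt] at h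
  rw [hi, hj]
  exact Nat.pow_dvd_pow p h

theorem orderOf_mul_eq_right_of_lt (hG : IsPGroup p G) {x y : G} (hxy : Commute x y)
    (h : orderOf x < orderOf y) : orderOf (x * y) = orderOf y := by
  obtain ⟨i, hi⟩ := IsPGroup.iff_orderOf.mp hG x
  obtain ⟨j, hj⟩ := IsPGroup.iff_orderOf.mp hG y
  rw [hi, hj, Nat.pow_lt_pow_iff_right hp.out.one_lt] at h
  refine hxy.orderOf_mul_eq_right_of_forall_prime_mul_dvd
    (orderOf_pos_iff.mp (hj ▸ pow_pos hp.out.pos j)) fun q hq hqx => ?_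
  rw [hi] at hqx
  obtain rfl := (Nat.prime_dvd_prime_iff_eq hq hp.out).mp (hq.dvd_of_dvd_pow hqx)
  rw [hi, hj, ← pow_succ']
  exact Nat.pow_dvd_pow q h

theorem exists_mem_upperCentralSeries_two_notMem_center [Finite G] (hG : IsPGroup p G)
    (h : center G < ⊤) : ∃ u ∈ Subgroup.upperCentralSeries G 2, u ∉ center G := by
  have : Nontrivial (G ⧸ center G) := QuotientGroup.nontrivial_iff.mpr h.ne
  have := (hG.to_quotient (center G)).center_nontrivial
  obtain ⟨q, hq⟩ := exists_ne (1 : center (G ⧸ center G))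
  obtain ⟨u, hu⟩ := mk_surjective (q : G ⧸ center G)
  refine ⟨u, mem_upperCentralSeries_two_iff.mpr (hu ▸ q.2), fun hu' => hq ?_⟩
  ext
  rw [← hu, OneMemClass.coe_one, eq_one_iff]
  exact hu'

theorem exists_mk_eq_and_orderOf_eq [Finite G] (hG : IsPGroup p G) {z₀ : G}
    (hz₀ : z₀ ∈ center G) (hmax : ∀ z ∈ center G, orderOf z ≤ orderOf z₀) {w : G}
    (hw : w ^ p ∈ center G) :
    ∃ x : G, (x : G ⧸ center G) = w ∧
      (orderOf x = orderOf z₀ ∨ orderOf x = p * orderOf z₀) := by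
  obtain ⟨⟨z, hz⟩, hzmax⟩ := Finite.exists_max fun z : center G => orderOf (w * z)
  have hcomm : ∀ g, ∀ z ∈ center G, Commute g z := fun g z hz => mem_center_iff.mp hz g
  refine ⟨w * z, by simp [(eq_one_iff _).mpr hz], ?_⟩
  have hdvd : orderOf (w * z) ∣ p * orderOf z₀ := by
    have hpow : (w * z) ^ p ∈ center G := by
      rw [(hcomm w z hz).mul_pow]
      exact mul_mem hw (pow_mem hz p)
    rw [orderOf_dvd_iff_pow_eq_one, pow_mul, ← orderOf_dvd_iff_pow_eq_one]
    exact hG.orderOf_dvd_of_le (hmax _ hpow)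
  have hle : orderOf z₀ ≤ orderOf (w * z) := by
    by_contra! hlt
    have hmul := hG.orderOf_mul_eq_right_of_lt (hcomm (w * z) z₀ hz₀) hlt
    have : orderOf (w * z * z₀) ≤ orderOf (w * z) := by
      rw [mul_assoc]; exact hzmax ⟨z * z₀, mul_mem hz hz₀⟩
    omega
  obtain ⟨i, hi⟩ := IsPGroup.iff_orderOf.mp hG (w * z)
  obtain ⟨e, he⟩ := IsPGroup.iff_orderOf.mp hG z₀
  rw [hi, he, ← pow_succ', Nat.pow_dvd_pow_iff_le_right hp.out.one_lt] at hdvd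
  rw [hi, he, Nat.pow_le_pow_iff_right hp.out.one_lt] at hle
  rw [hi, he, ← pow_succ']
  obtain rfl | rfl : i = e ∨ i = e + 1 := by omega
  exacts [Or.inl rfl, Or.inr rfl]

end IsPGroup

namespace IsOCGroup

theorem mk_eq_of_orderOf_eq (hOC : IsOCGroup G) {x y : G}
    (hx : x ∈ Subgroup.upperCentralSeries G 2) (hx' : x ∉ center G) (hy' : y ∉ center G)
    (h : orderOf x = orderOf y) : (x : G ⧸ center G) = y :=
  (hOC x y hx' hy' h).mk_eq_of_mem_upperCentralSeries_two hx

theorem mk_sq_eq_one (hOC : IsOCGroup G) {x : G} (hx : x ∈ Subgroup.upperCentralSeries G 2) :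
    (x : G ⧸ center G) ^ 2 = 1 := by
  by_cases hx' : x ∈ center G
  · rw [(eq_one_iff x).mpr hx', one_pow]
  have hinv := hOC.mk_eq_of_orderOf_eq hx hx' (by rwa [inv_mem_iff]) (orderOf_inv x).symm
  rw [sq, mul_eq_one_iff_eq_inv, ← mk_inv]
  exact hinv

theorem mk_eq_of_notMem_center [Finite G] (hOC : IsOCGroup G) (hG : IsPGroup 2 G) {u v : G}
    (hu : u ∈ Subgroup.upperCentralSeries G 2) (hv : v ∈ Subgroup.upperCentralSeries G 2)
    (hu' : u ∉ center G) (hv' : v ∉ center G) : (u : G ⧸ center G) = v := by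
  obtain ⟨⟨z₀, hz₀⟩, hmax⟩ := Finite.exists_max fun z : center G => orderOf (z : G)
  have hrep : ∀ w ∈ Subgroup.upperCentralSeries G 2, w ∉ center G →
      ∃ x ∈ Subgroup.upperCentralSeries G 2, x ∉ center G ∧ (x : G ⧸ center G) = w ∧
        (orderOf x = orderOf z₀ ∨ orderOf x = 2 * orderOf z₀) := by
    intro w hw hw'
    have hsq : w ^ 2 ∈ center G := by rw [← eq_one_iff, mk_pow, hOC.mk_sq_eq_one hw]
    obtain ⟨x, hxw, hx⟩ := hG.exists_mk_eq_and_orderOf_eq hz₀ (fun z hz => hmax ⟨z, hz⟩) hsq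
    refine ⟨x, ?_, ?_, hxw, hx⟩
    · rw [mem_upperCentralSeries_two_iff, hxw]
      exact mem_upperCentralSeries_two_iff.mp hw
    · rwa [← eq_one_iff, hxw, eq_one_iff]
  by_contra huv
  have hinv : (u : G ⧸ center G)⁻¹ = u :=
    inv_eq_of_mul_eq_one_right (by rw [← sq, hOC.mk_sq_eq_one hu])
  have huv' : u * v ∉ center G := fun h => huv <| by
    rw [← hinv]
    exact (eq_inv_of_mul_eq_one_right (by rw [← mk_mul, eq_one_iff]; exact h)).symm
  obtain ⟨x₁, hx₁, hx₁', hx₁u, ho₁⟩ := hrep u hu hu'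
  obtain ⟨x₂, hx₂, hx₂', hx₂v, ho₂⟩ := hrep v hv hv'
  obtain ⟨x₃, hx₃, hx₃', hx₃uv, ho₃⟩ := hrep (u * v) (mul_mem hu hv) huv'
  rcases (by omega : orderOf x₁ = orderOf x₂ ∨ orderOf x₁ = orderOf x₃ ∨ orderOf x₂ = orderOf x₃)
    with h | h | h
  · exact huv (hx₁u ▸ hx₂v ▸ hOC.mk_eq_of_orderOf_eq hx₁ hx₁' hx₂' h)
  · have h₁₃ := hOC.mk_eq_of_orderOf_eq hx₁ hx₁' hx₃' h
    rw [hx₁u, hx₃uv, mk_mul, left_eq_mul, eq_one_iff] at h₁₃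
    exact hv' h₁₃
  · have h₂₃ := hOC.mk_eq_of_orderOf_eq hx₂ hx₂' hx₃' h
    rw [hx₂v, hx₃uv, mk_mul, right_eq_mul, eq_one_iff] at h₂₃
    exact hu' h₂₃

end IsOCGroup

end

theorem second_center_index_two_general (G : Type) [Group G] [Finite G]
    (hG2 : IsPGroup 2 G)
    (hOC : ∀ x y : G, x ∉ Subgroup.center G → y ∉ Subgroup.center G →
      orderOf x = orderOf y → IsConj x y)
    (h2 : Subgroup.center G < ⊤) :
    (Subgroup.center G).relIndex (upperCentralSeries G 2) = 2 := by
  obtain ⟨u, hu, hu'⟩ := hG2.exists_mem_upperCentralSeries_two_notMem_center h2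
  refine Subgroup.relIndex_eq_two_iff_exists_notMem_and.mpr
    ⟨u, hu, hu', fun v hv => or_iff_not_imp_right.mpr fun hv' => ?_⟩
  rw [← QuotientGroup.eq_one_iff, QuotientGroup.mk_mul,
    IsOCGroup.mk_eq_of_notMem_center hOC hG2 hv hu hv' hu', ← sq, IsOCGroup.mk_sq_eq_one hOC hu]

/-- **Claim 2 in Lemma 2.6.** If `G` is a finite 2-group which is a
non-trivial OC-group, then `|Z₂(G) / Z(G)| = 2`, i.e. the center has index `2` in the
second center. -/
theorem second_center_index_two (G : Type) [Group G] [Finite G]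
    (hG2 : IsPGroup 2 G)
    (hOC : ∀ x y : G, x ∉ Subgroup.center G → y ∉ Subgroup.center G →
      orderOf x = orderOf y → IsConj x y)
    (h1 : ⊥ < Subgroup.center G) (h2 : Subgroup.center G < ⊤) :
    (Subgroup.center G).relIndex (upperCentralSeries G 2) = 2 :=
  second_center_index_two_general G hG2 hOC h2
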